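/- arXiv:1908.06771 — 4 statements merged into one kernel-verified Lean document; each statement's English description precedes it below -/
import Mathlib

section
/- Let k ≥ 1, let g : [0,∞) → ℝ be continuous and strictly increasing, and let A ⊂ ℝ^k be a Borel set of finite Lebesgue measure such that x ↦ g(|x|) is integrable over A. Then ∫_{A*} g(|x|) dx ≤ ∫_{A} g(|x|) dx, and equality holds if and only if the symmetric difference A Δ A* has Lebesgue measure zero. -/
noncomputable section

open MeasureTheory Filter Metric Real Classical
open scoped ENNReal Topology Pointwise RealInnerProductSpace ComplexConjugate

/-- `ℝⁿ` with its Euclidean structure. -/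
abbrev Euc (n : ℕ) : Type := EuclideanSpace ℝ (Fin n)

/-- The open ball centered at the origin with the same volume as `A`. -/
def setRearr {k : ℕ} (A : Set (Euc k)) : Set (Euc k) :=
  ball (0 : Euc k) (((volume A).toReal / (volume (ball (0 : Euc k) 1)).toReal) ^ ((k : ℝ)⁻¹))

/-- The symmetric-decreasing rearrangement `f*(x) = ∫₀^∞ χ_{{|f|>t}*}(x) dt` of `f`. -/
def symmRearr {k : ℕ} {α : Type*} [NormedAddCommGroup α] (f : Euc k → α) : Euc k → ℝ :=
  fun x =>
    (∫⁻ t in Set.Ioi (0 : ℝ), (setRearr {y | t < ‖f y‖}).indicator (fun _ => (1 : ℝ≥0∞)) x).toReal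

theorem statement12 (k : ℕ) (hk : 1 ≤ k) (g : ℝ → ℝ)
    (hgc : ContinuousOn g (Set.Ici 0)) (hgm : StrictMonoOn g (Set.Ici 0))
    (A : Set (Euc k)) (hA : MeasurableSet A) (hAfin : volume A < ⊤)
    (hint : IntegrableOn (fun x => g ‖x‖) A volume) :
    (∫ x in setRearr A, g ‖x‖) ≤ (∫ x in A, g ‖x‖) ∧
    ((∫ x in setRearr A, g ‖x‖) = (∫ x in A, g ‖x‖) ↔
      volume (symmDiff A (setRearr A)) = 0) := by
  haveI : Nontrivial (Euc k) := by
    refine Module.nontrivial_of_finrank_pos (R := ℝ) ?_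
    rw [finrank_euclideanSpace_fin]; omega
  set f : Euc k → ℝ := fun x => g ‖x‖ with hf_def
  have hf : Continuous f :=
    hgc.comp_continuous continuous_norm fun x => norm_nonneg x
  set r : ℝ := ((volume A).toReal / (volume (ball (0 : Euc k) 1)).toReal) ^ ((k : ℝ)⁻¹) with hr_def
  set B : Set (Euc k) := ball (0 : Euc k) r with hB_def
  have hBr : setRearr A = B := rfl
  have hc0 : (0 : ℝ≥0∞) < volume (ball (0 : Euc k) 1) := measure_ball_pos _ _ one_pos
  have hct : volume (ball (0 : Euc k) 1) ≠ ⊤ := measure_ball_lt_top.ne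
  have hctr : (0:ℝ) < (volume (ball (0 : Euc k) 1)).toReal :=
    ENNReal.toReal_pos hc0.ne' hct
  have ha0 : (0:ℝ) ≤ (volume A).toReal / (volume (ball (0 : Euc k) 1)).toReal :=
    div_nonneg ENNReal.toReal_nonneg hctr.le
  have hr0 : 0 ≤ r := Real.rpow_nonneg ha0 _
  -- volume of B equals volume of A
  have hrk : r ^ k = (volume A).toReal / (volume (ball (0 : Euc k) 1)).toReal := by
    rw [hr_def, ← Real.rpow_natCast (_ ^ _) k, ← Real.rpow_mul ha0,
      inv_mul_cancel₀ (Nat.cast_ne_zero.mpr (by omega) : (k:ℝ) ≠ 0),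
      Real.rpow_one]
  have hvolB : volume B = volume A := by
    rw [hB_def, Measure.addHaar_ball _ _ hr0, finrank_euclideanSpace_fin, hrk,
      ENNReal.ofReal_div_of_pos hctr, ENNReal.ofReal_toReal hAfin.ne,
      ENNReal.ofReal_toReal hct, ENNReal.div_mul_cancel hc0.ne' hct]
  have hB : MeasurableSet B := measurableSet_ball
  have hBfin : volume B < ⊤ := hvolB ▸ hAfin
  -- integrability on B
  have hfB : IntegrableOn f B := by
    refine (hf.continuousOn.integrableOn_compact (isCompact_closedBall 0 r)).mono_set
      ball_subset_closedBall
  -- measures of the two difference pieces agree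
  have hmeq : volume (B \ A) = volume (A \ B) := by
    have h1 : volume (A \ B) + volume (A ∩ B) = volume A := measure_diff_add_inter A hB
    have h2 : volume (B \ A) + volume (B ∩ A) = volume B := measure_diff_add_inter B hA
    rw [Set.inter_comm B A] at h2
    have := h1.trans (hvolB.symm.trans h2.symm)
    exact (ENNReal.add_left_inj
      (lt_of_le_of_lt (measure_mono Set.inter_subset_left ) hAfin).ne).mp this.symm
  -- pointwise bounds
  have hub : ∀ x ∈ B \ A, f x ≤ g r := fun x hx =>
    (hgm.monotoneOn (norm_nonneg x) (Set.mem_Ici.mpr hr0) (le_of_lt (mem_ball_zero_iff.mp hx.1))).trans le_rfl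
  have hlb : ∀ x ∈ A \ B, g r ≤ f x := fun x hx => by
    have : r ≤ ‖x‖ := by
      by_contra h
      exact hx.2 (by simpa [hB_def, mem_ball, dist_eq_norm] using lt_of_not_ge h)
    exact hgm.monotoneOn (Set.mem_Ici.mpr hr0) (norm_nonneg x) this
  -- integral comparisons on the pieces
  have hfBd : IntegrableOn f (B \ A) := hfB.mono_set Set.diff_subset
  have hfAd : IntegrableOn f (A \ B) := hint.mono_set Set.diff_subset
  have hIB : ∫ x in B \ A, f x ≤ g r * (volume (B \ A)).toReal := by
    calc ∫ x in B \ A, f x ≤ ∫ _ in B \ A, g r :=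
          setIntegral_mono_on hfBd ((integrableOn_const_iff).mpr
            (Or.inr (lt_of_le_of_lt (measure_mono Set.diff_subset) hBfin)))
            (hB.diff hA) hub
      _ = g r * (volume (B \ A)).toReal := by
          rw [setIntegral_const, smul_eq_mul, mul_comm, measureReal_def]
  have hIA : g r * (volume (A \ B)).toReal ≤ ∫ x in A \ B, f x := by
    calc (g r) * (volume (A \ B)).toReal = ∫ _ in A \ B, g r := by
          rw [setIntegral_const, smul_eq_mul, mul_comm, measureReal_def]
      _ ≤ ∫ x in A \ B, f x :=
          setIntegral_mono_on ((integrableOn_const_iff).mpr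
            (Or.inr (lt_of_le_of_lt (measure_mono Set.diff_subset) hAfin)))
            hfAd (hA.diff hB) hlb
  have hpiece : ∫ x in B \ A, f x ≤ ∫ x in A \ B, f x := by
    refine hIB.trans ?_
    rw [hmeq]; exact hIA
  -- splitting of the integrals
  have hsplitA : ∫ x in A, f x = (∫ x in A ∩ B, f x) + ∫ x in A \ B, f x := by
    rw [← setIntegral_union (disjoint_sdiff_self_right.mono_left Set.inter_subset_right)
      (hA.diff hB) (hint.mono_set Set.inter_subset_left) hfAd, Set.inter_union_diff]
  have hsplitB : ∫ x in B, f x = (∫ x in A ∩ B, f x) + ∫ x in B \ A, f x := by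
    rw [← setIntegral_union (disjoint_sdiff_self_right.mono_left Set.inter_subset_left)
      (hB.diff hA) (hfB.mono_set Set.inter_subset_right) hfBd, Set.inter_comm,
      Set.inter_union_diff]
  have hle : (∫ x in B, f x) ≤ ∫ x in A, f x := by
    rw [hsplitA, hsplitB]; linarith
  rw [hBr]
  refine ⟨hle, ?_, ?_⟩
  · -- equality → symmDiff null
    intro heq
    have hpi : ∫ x in B \ A, f x = ∫ x in A \ B, f x := by
      rw [hsplitA, hsplitB] at heq; linarith
    have hBA0 : volume (B \ A) = 0 := by
      by_contra h0
      have hpos : 0 < ∫ x in B \ A, (g r - f x) := by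
        rw [setIntegral_pos_iff_support_of_nonneg_ae]
        · refine lt_of_lt_of_le (pos_iff_ne_zero.mpr ?_) (measure_mono ?_ : volume (B \ A) ≤ _)
          · exact h0
          · intro x hx
            refine ⟨?_, hx⟩
            have hlt : ‖x‖ < r := mem_ball_zero_iff.mp hx.1
            have : f x < g r := hgm (Set.mem_Ici.mpr (norm_nonneg x)) (Set.mem_Ici.mpr hr0) hlt
            simp [Function.mem_support, sub_ne_zero]
            exact (ne_of_lt this).symm
        · refine (ae_restrict_iff' (hB.diff hA)).mpr (ae_of_all _ fun x hx => ?_)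
          exact sub_nonneg.mpr (hub x hx)
        · exact ((integrableOn_const_iff).mpr (Or.inr (lt_of_le_of_lt
            (measure_mono Set.diff_subset) hBfin))).sub hfBd
      rw [integral_sub ((integrableOn_const_iff (C := g r) (s := B \ A) (μ := volume)).mpr (Or.inr (lt_of_le_of_lt
        (measure_mono Set.diff_subset) hBfin))) hfBd, setIntegral_const, smul_eq_mul, measureReal_def,
        sub_pos] at hpos
      have : ∫ x in B \ A, f x < g r * (volume (A \ B)).toReal := by
        rw [← hmeq]; linarith [hpos]
      linarith [hIA, hpi]
    have hAB0 : volume (A \ B) = 0 := by rw [← hmeq]; exact hBA0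
    rw [Set.symmDiff_def, measure_union_null_iff]
    exact ⟨hAB0, hBA0⟩
  · -- symmDiff null → equality
    intro hsd
    rw [Set.symmDiff_def, measure_union_null_iff] at hsd
    have h1 : ∫ x in A \ B, f x = 0 := by
      rw [Measure.restrict_eq_zero.mpr hsd.1, integral_zero_measure]
    have h2 : ∫ x in B \ A, f x = 0 := by
      rw [Measure.restrict_eq_zero.mpr hsd.2, integral_zero_measure]
    rw [hsplitA, hsplitB, h1, h2]
end
end

section
/- Let n ≥ 2 and let f : ℝ^n → [0,∞) be measurable and vanishing at infinity. Let w : ℝ^n → ℝ be of the form w(ξ₁, ξ') = W(ξ₁, |ξ'|) for (ξ₁, ξ') ∈ ℝ × ℝ^{n-1}, where for each fixed ξ₁ ∈ ℝ the map r ↦ W(ξ₁, r) is continuous and strictly increasing on [0,∞). Assume that f·w and f^{*₁}·w are integrable on ℝ^n. Then ∫_{ℝ^n} f^{*₁}(ξ) w(ξ) dξ ≤ ∫_{ℝ^n} f(ξ) w(ξ) dξ. -/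
noncomputable section

open MeasureTheory Filter Metric Real Classical
open scoped ENNReal Topology Pointwise RealInnerProductSpace ComplexConjugate

/-- Steiner symmetrization in `n-1` codimensions with respect to the first coordinate
direction: symmetric-decreasing rearrangement in the hyperplanes `{x₁} × ℝ^{n-1}`. -/
def steiner1 {m : ℕ} {α : Type*} [NormedAddCommGroup α] (u : Euc (m + 1) → α) :
    Euc (m + 1) → ℝ := fun x =>
  symmRearr (fun y : Euc m => u (show Euc (m + 1) from WithLp.toLp 2 (Fin.cons (x 0) (fun j => y j) : Fin (m + 1) → ℝ)))
    (show Euc m from WithLp.toLp 2 (fun j => x j.succ))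

/-- Steiner symmetrization in `n-1` codimensions with respect to the direction `e = R⁻¹ e₁`,
where `R ∈ O(n)` is an orthogonal map sending `e` to the first coordinate vector `e₁`:
`u^{*_e} = R⁻¹ ((R u)^{*₁})`. -/
def steinerE {m : ℕ} {α : Type*} [NormedAddCommGroup α]
    (R : Euc (m + 2) ≃ₗᵢ[ℝ] Euc (m + 2)) (u : Euc (m + 2) → α) : Euc (m + 2) → ℝ :=
  fun x => steiner1 (fun y => u (R.symm y)) (R x)

/-- A function vanishes at infinity if all its superlevel sets have finite measure. -/
def VanishAtInfty {k : ℕ} {α : Type*} [NormedAddCommGroup α] (f : Euc k → α) : Prop :=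
  ∀ t : ℝ, 0 < t → volume {x | t < ‖f x‖} < ⊤

/-!
By Fubini it suffices to prove the inequality on almost every slice `{x₁} × ℝ^{n-1}`, where
the weight `u y = W(x₁, ‖y‖)` is nondecreasing in `‖y‖`. Writing `u⁺` and `u⁻` as integrals of
indicators of their superlevel sets `∫_{s>0} 1_{u^± > s} ds`, one has to compare `∫_B g` with
`∫_B g*` where `B` is closed downward under the norm (for `u⁻`), or its complement (for `u⁺`).
Such a `B` and the centered ball `{g > t}*` are nested, which gives
`|{g > t} ∩ B| ≤ |{g > t}* ∩ B|` and `|{g > t}* \ B| ≤ |{g > t} \ B|`; the layer-cake formula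
and `{g* > t} ⊆ {g > t}* ⊆ {g* ≥ t} ∪ {0}` turn these into the two integral comparisons.
-/

open Set

section IsNormLowerSet

variable {E : Type*} [SeminormedAddCommGroup E]

def IsNormLowerSet (B : Set E) : Prop :=
  ∀ ⦃x⦄, x ∈ B → ∀ ⦃y : E⦄, ‖y‖ ≤ ‖x‖ → y ∈ B

lemma IsNormLowerSet.ball_subset_or_subset_ball {B : Set E} (hB : IsNormLowerSet B) (r : ℝ) :
    ball 0 r ⊆ B ∨ B ⊆ ball 0 r := by
  refine or_iff_not_imp_left.2 fun hr ↦ ?_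
  obtain ⟨y, hyr, hyB⟩ := not_subset.1 hr
  intro x hx
  rw [mem_ball_zero_iff] at hyr ⊢
  exact (lt_of_not_ge fun hyx ↦ hyB (hB hx hyx)).trans hyr

lemma IsNormLowerSet.measurableSet [MeasurableSpace E] [OpensMeasurableSpace E] {B : Set E}
    (hB : IsNormLowerSet B) : MeasurableSet B := by
  have hS : IsLowerSet {r : ℝ | ∃ x ∈ B, r ≤ ‖x‖} :=
    fun r s hsr ⟨x, hx, hrx⟩ ↦ ⟨x, hx, hsr.trans hrx⟩
  have hBS : B = (‖·‖) ⁻¹' {r : ℝ | ∃ x ∈ B, r ≤ ‖x‖} :=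
    Set.ext fun y ↦ ⟨fun hy ↦ ⟨y, hy, le_rfl⟩, fun ⟨_, hx, hyx⟩ ↦ hB hx hyx⟩
  rw [hBS]
  exact continuous_norm.measurable hS.ordConnected.measurableSet

lemma isNormLowerSet_setOf_le {u : E → ℝ} (hu : ∀ x y, ‖x‖ ≤ ‖y‖ → u x ≤ u y) (s : ℝ) :
    IsNormLowerSet {x | u x ≤ s} :=
  fun _ hx _ hyx ↦ (hu _ _ hyx).trans hx

lemma isNormLowerSet_setOf_lt {u : E → ℝ} (hu : ∀ x y, ‖x‖ ≤ ‖y‖ → u y ≤ u x) (s : ℝ) :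
    IsNormLowerSet {x | s < u x} :=
  fun _ hx _ hyx ↦ hx.trans_le (hu _ _ hyx)

lemma measurable_of_norm_le_imp_le [MeasurableSpace E] [OpensMeasurableSpace E] {u : E → ℝ}
    (hu : ∀ x y, ‖x‖ ≤ ‖y‖ → u x ≤ u y) : Measurable u :=
  measurable_of_Iic fun s ↦ (isNormLowerSet_setOf_le hu s).measurableSet

end IsNormLowerSet

section setRearr

variable {k : ℕ}

lemma volume_setRearr {A : Set (Euc (k + 1))} (hA : volume A ≠ ∞) :
    volume (setRearr A) = volume A := by
  have hω₀ : volume (ball (0 : Euc (k + 1)) 1) ≠ 0 := (measure_ball_pos _ _ one_pos).ne'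
  have hω : volume (ball (0 : Euc (k + 1)) 1) ≠ ∞ := measure_ball_lt_top.ne
  have hq : 0 ≤ (volume A).toReal / (volume (ball (0 : Euc (k + 1)) 1)).toReal := by positivity
  rw [setRearr, Measure.addHaar_ball _ _ (by positivity), finrank_euclideanSpace_fin,
    ← Real.rpow_natCast, ← Real.rpow_mul hq, inv_mul_cancel₀ (by positivity), Real.rpow_one,
    ENNReal.ofReal_div_of_pos (ENNReal.toReal_pos hω₀ hω), ENNReal.ofReal_toReal hA,
    ENNReal.ofReal_toReal hω, ENNReal.div_mul_cancel hω₀ hω]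

lemma setRearr_subset_setRearr {A B : Set (Euc (k + 1))} (hAB : volume A ≤ volume B)
    (hB : volume B ≠ ∞) : setRearr A ⊆ setRearr B := by
  refine ball_subset_ball (Real.rpow_le_rpow (by positivity) ?_ (by positivity))
  gcongr

lemma notMem_setRearr_of_volume_lt {A : Set (Euc (k + 1))} {x : Euc (k + 1)}
    (h : volume A < volume (ball (0 : Euc (k + 1)) ‖x‖)) : x ∉ setRearr A := by
  intro hx
  have hsub : ball 0 ‖x‖ ⊆ setRearr A := ball_subset_ball (mem_ball_zero_iff.1 hx).le
  have hA : volume A ≠ ∞ := (h.trans measure_ball_lt_top).ne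
  exact (measure_mono hsub).trans_eq (volume_setRearr hA) |>.not_gt h

lemma volume_inter_le_volume_setRearr_inter {A B : Set (Euc (k + 1))} (hA : volume A ≠ ∞)
    (hB : IsNormLowerSet B) : volume (A ∩ B) ≤ volume (setRearr A ∩ B) := by
  obtain hAB | hBA : setRearr A ⊆ B ∨ B ⊆ setRearr A := hB.ball_subset_or_subset_ball _
  · calc volume (A ∩ B) ≤ volume A := measure_mono inter_subset_left
      _ = volume (setRearr A ∩ B) := by rw [inter_eq_left.2 hAB, volume_setRearr hA]
  · rw [inter_eq_right.2 hBA]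
    exact measure_mono inter_subset_right

lemma volume_setRearr_inter_compl_le {A B : Set (Euc (k + 1))} (hA : volume A ≠ ∞)
    (hB : IsNormLowerSet B) : volume (setRearr A ∩ Bᶜ) ≤ volume (A ∩ Bᶜ) := by
  have hAB : volume (A ∩ B) ≠ ∞ := ne_top_of_le_ne_top hA (measure_mono inter_subset_left)
  refine ENNReal.le_of_add_le_add_left hAB ?_
  calc volume (A ∩ B) + volume (setRearr A ∩ Bᶜ)
      ≤ volume (setRearr A ∩ B) + volume (setRearr A ∩ Bᶜ) := by
        gcongr ?_ + _; exact volume_inter_le_volume_setRearr_inter hA hB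
    _ = volume A := by
        rw [← sdiff_eq, measure_inter_add_sdiff _ hB.measurableSet, volume_setRearr hA]
    _ = volume (A ∩ B) + volume (A ∩ Bᶜ) := by
        rw [← sdiff_eq, measure_inter_add_sdiff _ hB.measurableSet]

end setRearr

section symmRearr

lemma VanishAtInfty.tendsto_volume_superlevel {k : ℕ} {α : Type*} [NormedAddCommGroup α]
    [MeasurableSpace α] [OpensMeasurableSpace α] {g : Euc k → α} (hg : VanishAtInfty g)
    (hgm : Measurable g) : Tendsto (fun t ↦ volume {y | t < ‖g y‖}) atTop (𝓝 0) := by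
  have h := tendsto_measure_iInter_atTop (μ := volume) (s := fun t : ℝ ↦ {y | t < ‖g y‖})
    (fun _ ↦ (measurableSet_lt measurable_const hgm.norm).nullMeasurableSet)
    (fun _ _ hst _ hy ↦ hst.trans_lt hy) ⟨1, (hg 1 one_pos).ne⟩
  have hempty : ⋂ t : ℝ, {y | t < ‖g y‖} = ∅ :=
    eq_empty_of_forall_notMem fun y hy ↦ lt_irrefl ‖g y‖ (mem_iInter.1 hy ‖g y‖)
  rwa [hempty, measure_empty] at h

variable {k : ℕ} {α : Type*} [NormedAddCommGroup α] {g : Euc (k + 1) → α}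

lemma measurableSet_mem_setRearr_superlevel (g : Euc (k + 1) → α) :
    MeasurableSet {p : Euc (k + 1) × ℝ | p.1 ∈ setRearr {y | p.2 < ‖g y‖}} := by
  have hvol : Measurable fun t : ℝ ↦ volume {y | t < ‖g y‖} :=
    Antitone.measurable fun s t hst ↦ measure_mono fun y hy ↦ hst.trans_lt hy
  simp only [setRearr, mem_ball_zero_iff]
  exact measurableSet_lt measurable_fst.norm
    (((hvol.ennreal_toReal.div_const _).pow_const _).comp measurable_snd)

lemma symmRearr_eq_toReal_volume (g : Euc (k + 1) → α) (x : Euc (k + 1)) :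
    symmRearr g x = (volume ({t | x ∈ setRearr {y | t < ‖g y‖}} ∩ Ioi 0)).toReal := by
  have hmeas : MeasurableSet {t : ℝ | x ∈ setRearr {y | t < ‖g y‖}} :=
    measurable_prodMk_left (measurableSet_mem_setRearr_superlevel g)
  rw [symmRearr, ← Measure.restrict_apply hmeas, ← lintegral_indicator_one hmeas]
  rfl

lemma measurable_symmRearr (g : Euc (k + 1) → α) : Measurable (symmRearr g) :=
  (Measurable.lintegral_prod_right'
    (measurable_const.indicator (measurableSet_mem_setRearr_superlevel g))).ennreal_toReal

lemma symmRearr_nonneg (g : Euc (k + 1) → α) (x : Euc (k + 1)) : 0 ≤ symmRearr g x :=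
  ENNReal.toReal_nonneg

lemma setRearr_superlevel_subset (hg : VanishAtInfty g) {s t : ℝ} (hs : 0 < s) (hst : s ≤ t) :
    setRearr {y | t < ‖g y‖} ⊆ setRearr {y | s < ‖g y‖} :=
  setRearr_subset_setRearr (measure_mono fun _ hy ↦ hst.trans_lt hy) (hg s hs).ne

lemma superlevel_symmRearr_subset (hg : VanishAtInfty g) {t : ℝ} (ht : 0 < t) :
    {x | t < symmRearr g x} ⊆ setRearr {y | t < ‖g y‖} := by
  intro x hx
  by_contra hxt
  have hsub : {s | x ∈ setRearr {y | s < ‖g y‖}} ∩ Ioi 0 ⊆ Ioc 0 t := fun s ⟨hxs, hs⟩ ↦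
    ⟨hs, le_of_not_gt fun hts ↦ hxt (setRearr_superlevel_subset hg ht hts.le hxs)⟩
  have := ENNReal.toReal_mono (measure_Ioc_lt_top (μ := volume)).ne (measure_mono hsub)
  rw [Real.volume_Ioc, sub_zero, ENNReal.toReal_ofReal ht.le, ← symmRearr_eq_toReal_volume] at this
  exact this.not_gt hx

/-- The origin is excluded because the `t`-set defining `symmRearr g 0` may have infinite measure,
and then `symmRearr g 0 = 0` by the `toReal` convention. -/
lemma setRearr_superlevel_diff_subset [MeasurableSpace α] [OpensMeasurableSpace α]
    (hg : VanishAtInfty g) (hgm : Measurable g) {t : ℝ} (ht : 0 < t) :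
    setRearr {y | t < ‖g y‖} \ {0} ⊆ {x | t ≤ symmRearr g x} := by
  rintro x ⟨hxt, hx0⟩
  have hball : 0 < volume (ball (0 : Euc (k + 1)) ‖x‖) :=
    measure_ball_pos _ _ (norm_pos_iff.2 hx0)
  obtain ⟨T, hT⟩ :=
    ((hg.tendsto_volume_superlevel hgm).eventually_lt_const hball).exists_forall_of_atTop
  have hbounded : {s | x ∈ setRearr {y | s < ‖g y‖}} ∩ Ioi 0 ⊆ Ioc 0 T := fun s ⟨hxs, hs⟩ ↦
    ⟨hs, le_of_not_gt fun hTs ↦ notMem_setRearr_of_volume_lt (hT s hTs.le) hxs⟩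
  have hlower : Ioc 0 t ⊆ {s | x ∈ setRearr {y | s < ‖g y‖}} ∩ Ioi 0 := fun s ⟨hs, hst⟩ ↦
    ⟨setRearr_superlevel_subset hg hs hst hxt, hs⟩
  have hfin := ((measure_mono hbounded).trans_lt (measure_Ioc_lt_top (μ := volume))).ne
  have := ENNReal.toReal_mono hfin (measure_mono hlower)
  rwa [Real.volume_Ioc, sub_zero, ENNReal.toReal_ofReal ht.le, ← symmRearr_eq_toReal_volume] at this

end symmRearr

section LayerCake

variable {k : ℕ} {α : Type*} [NormedAddCommGroup α] [MeasurableSpace α] [OpensMeasurableSpace α]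
  {g : Euc (k + 1) → α} {B : Set (Euc (k + 1))}

lemma setLIntegral_norm_le_setLIntegral_symmRearr (hg : VanishAtInfty g) (hgm : Measurable g)
    (hB : IsNormLowerSet B) :
    ∫⁻ x in B, ENNReal.ofReal ‖g x‖ ≤ ∫⁻ x in B, ENNReal.ofReal (symmRearr g x) := by
  rw [lintegral_eq_lintegral_meas_lt _ (ae_of_all _ fun _ ↦ norm_nonneg _) hgm.norm.aemeasurable,
    lintegral_eq_lintegral_meas_le _ (ae_of_all _ (symmRearr_nonneg g))
      (measurable_symmRearr g).aemeasurable]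
  refine setLIntegral_mono' measurableSet_Ioi fun t ht ↦ ?_
  rw [Measure.restrict_apply' hB.measurableSet, Measure.restrict_apply' hB.measurableSet]
  calc volume ({x | t < ‖g x‖} ∩ B)
      ≤ volume (setRearr {y | t < ‖g y‖} ∩ B) :=
        volume_inter_le_volume_setRearr_inter (hg t ht).ne hB
    _ = volume ((setRearr {y | t < ‖g y‖} ∩ B) \ {0}) := (measure_sdiff_null (by simp)).symm
    _ ≤ volume ({x | t ≤ symmRearr g x} ∩ B) := measure_mono fun x ⟨⟨hxt, hxB⟩, hx0⟩ ↦
        ⟨setRearr_superlevel_diff_subset hg hgm ht ⟨hxt, hx0⟩, hxB⟩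

lemma setLIntegral_compl_symmRearr_le_setLIntegral_compl_norm (hg : VanishAtInfty g)
    (hgm : Measurable g) (hB : IsNormLowerSet B) :
    ∫⁻ x in Bᶜ, ENNReal.ofReal (symmRearr g x) ≤ ∫⁻ x in Bᶜ, ENNReal.ofReal ‖g x‖ := by
  rw [lintegral_eq_lintegral_meas_lt _ (ae_of_all _ (symmRearr_nonneg g))
      (measurable_symmRearr g).aemeasurable,
    lintegral_eq_lintegral_meas_lt _ (ae_of_all _ fun _ ↦ norm_nonneg _) hgm.norm.aemeasurable]
  refine setLIntegral_mono' measurableSet_Ioi fun t ht ↦ ?_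
  rw [Measure.restrict_apply' hB.measurableSet.compl,
    Measure.restrict_apply' hB.measurableSet.compl]
  calc volume ({x | t < symmRearr g x} ∩ Bᶜ)
      ≤ volume (setRearr {y | t < ‖g y‖} ∩ Bᶜ) :=
        measure_mono (inter_subset_inter_left _ (superlevel_symmRearr_subset hg ht))
    _ ≤ volume ({x | t < ‖g x‖} ∩ Bᶜ) := volume_setRearr_inter_compl_le (hg t ht).ne hB

end LayerCake

lemma lintegral_mul_ofReal_eq_lintegral_setLIntegral {β : Type*} [MeasurableSpace β]
    {μ : Measure β} {H : β → ℝ≥0∞} (hH : Measurable H) {u : β → ℝ} (hu : Measurable u) :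
    ∫⁻ x, H x * ENNReal.ofReal (u x) ∂μ = ∫⁻ s in Ioi 0, ∫⁻ x in {x | s < u x}, H x ∂μ := by
  have hmax : Measurable fun x ↦ max (u x) 0 := hu.max measurable_const
  calc ∫⁻ x, H x * ENNReal.ofReal (u x) ∂μ
      = ∫⁻ x, ENNReal.ofReal (max (u x) 0) ∂μ.withDensity H := by
        rw [lintegral_withDensity_eq_lintegral_mul _ hH hmax.ennreal_ofReal]
        simp
    _ = ∫⁻ s in Ioi 0, μ.withDensity H {x | s < max (u x) 0} :=
        lintegral_eq_lintegral_meas_lt _ (ae_of_all _ fun _ ↦ le_max_right _ _) hmax.aemeasurable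
    _ = ∫⁻ s in Ioi 0, ∫⁻ x in {x | s < u x}, H x ∂μ := by
        refine setLIntegral_congr_fun measurableSet_Ioi fun s hs ↦ ?_
        have hlevel : {x | s < max (u x) 0} = {x | s < u x} := by
          ext x; simp [not_lt_of_gt (mem_Ioi.1 hs)]
        rw [hlevel, withDensity_apply _ (measurableSet_lt measurable_const hu)]

section Weighted

variable {k : ℕ} {α : Type*} [NormedAddCommGroup α] [MeasurableSpace α] [OpensMeasurableSpace α]
  {g : Euc (k + 1) → α} {u : Euc (k + 1) → ℝ}

lemma lintegral_symmRearr_mul_le_lintegral_norm_mul (hg : VanishAtInfty g)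
    (hgm : Measurable g) (hu : ∀ x y, ‖x‖ ≤ ‖y‖ → u x ≤ u y) :
    ∫⁻ x, ENNReal.ofReal (symmRearr g x) * ENNReal.ofReal (u x)
      ≤ ∫⁻ x, ENNReal.ofReal ‖g x‖ * ENNReal.ofReal (u x) := by
  have hum := measurable_of_norm_le_imp_le hu
  rw [lintegral_mul_ofReal_eq_lintegral_setLIntegral (measurable_symmRearr g).ennreal_ofReal hum,
    lintegral_mul_ofReal_eq_lintegral_setLIntegral hgm.norm.ennreal_ofReal hum]
  refine lintegral_mono fun s ↦ ?_
  simpa only [compl_ofPred, not_le] using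
    setLIntegral_compl_symmRearr_le_setLIntegral_compl_norm hg hgm (isNormLowerSet_setOf_le hu s)

lemma lintegral_norm_mul_le_lintegral_symmRearr_mul (hg : VanishAtInfty g)
    (hgm : Measurable g) (hu : ∀ x y, ‖x‖ ≤ ‖y‖ → u y ≤ u x) :
    ∫⁻ x, ENNReal.ofReal ‖g x‖ * ENNReal.ofReal (u x)
      ≤ ∫⁻ x, ENNReal.ofReal (symmRearr g x) * ENNReal.ofReal (u x) := by
  have hum : Measurable u := by
    simpa using (measurable_of_norm_le_imp_le (u := -u)
      fun x y hxy ↦ neg_le_neg (hu x y hxy)).neg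
  rw [lintegral_mul_ofReal_eq_lintegral_setLIntegral (measurable_symmRearr g).ennreal_ofReal hum,
    lintegral_mul_ofReal_eq_lintegral_setLIntegral hgm.norm.ennreal_ofReal hum]
  exact lintegral_mono fun s ↦
    setLIntegral_norm_le_setLIntegral_symmRearr hg hgm (isNormLowerSet_setOf_lt hu s)

theorem integral_symmRearr_mul_le (hg : VanishAtInfty g) (hgm : Measurable g)
    (hu : ∀ x y, ‖x‖ ≤ ‖y‖ → u x ≤ u y) (hi : Integrable fun x ↦ ‖g x‖ * u x)
    (hi' : Integrable fun x ↦ symmRearr g x * u x) :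
    ∫ x, symmRearr g x * u x ≤ ∫ x, ‖g x‖ * u x := by
  have hfin := hi.lintegral_lt_top
  have hfin' := hi'.neg.lintegral_lt_top
  rw [integral_eq_lintegral_pos_part_sub_lintegral_neg_part hi,
    integral_eq_lintegral_pos_part_sub_lintegral_neg_part hi']
  simp only [Pi.neg_apply, ← mul_neg, ENNReal.ofReal_mul (norm_nonneg _),
    ENNReal.ofReal_mul (symmRearr_nonneg g _)] at hfin hfin' ⊢
  gcongr ?_ - ?_
  · exact ENNReal.toReal_mono hfin.ne (lintegral_symmRearr_mul_le_lintegral_norm_mul hg hgm hu)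
  · exact ENNReal.toReal_mono hfin'.ne
      (lintegral_norm_mul_le_lintegral_symmRearr_mul hg hgm fun x y hxy ↦ neg_le_neg (hu x y hxy))

end Weighted

lemma vanishAtInfty_of_forall_nat {k : ℕ} {α : Type*} [NormedAddCommGroup α] {g : Euc k → α}
    (h : ∀ q : ℕ, volume {x | 1 / ((q : ℝ) + 1) < ‖g x‖} < ∞) : VanishAtInfty g := fun _ ht ↦
  have ⟨q, hq⟩ := exists_nat_one_div_lt ht
  (measure_mono fun _ hx ↦ hq.trans hx).trans_lt (h q)

section Slices

variable {n : ℕ}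

def consMeasurableEquiv (n : ℕ) : ℝ × Euc n ≃ᵐ Euc (n + 1) :=
  ((MeasurableEquiv.refl ℝ).prodCongr (MeasurableEquiv.toLp 2 (Fin n → ℝ)).symm).trans
    ((MeasurableEquiv.piFinSuccAbove (fun _ : Fin (n + 1) ↦ ℝ) 0).symm.trans
      (MeasurableEquiv.toLp 2 (Fin (n + 1) → ℝ)))

lemma consMeasurableEquiv_apply (a : ℝ) (y : Euc n) :
    consMeasurableEquiv n (a, y) = WithLp.toLp 2 (Fin.cons a fun j ↦ y j) := by
  simp only [consMeasurableEquiv, MeasurableEquiv.trans_apply,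
    MeasurableEquiv.piFinSuccAbove_symm_apply, Fin.insertNthEquiv_zero, MeasurableEquiv.toLp_apply]
  rfl

lemma measurePreserving_consMeasurableEquiv (n : ℕ) :
    MeasurePreserving (consMeasurableEquiv n) (volume.prod volume) volume :=
  ((EuclideanSpace.volume_preserving_symm_measurableEquiv_toLp (Fin (n + 1))).symm _).comp
    (((volume_preserving_piFinSuccAbove (fun _ : Fin (n + 1) ↦ ℝ) 0).symm _).comp
      ((MeasurePreserving.id volume).prod
        (EuclideanSpace.volume_preserving_symm_measurableEquiv_toLp (Fin n))))

lemma steiner1_consMeasurableEquiv {α : Type*} [NormedAddCommGroup α] (f : Euc (n + 1) → α)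
    (a : ℝ) (y : Euc n) :
    steiner1 f (consMeasurableEquiv n (a, y))
      = symmRearr (fun y' ↦ f (consMeasurableEquiv n (a, y'))) y := by
  simp only [consMeasurableEquiv_apply]
  rfl

lemma VanishAtInfty.ae_vanishAtInfty_slice {α : Type*} [NormedAddCommGroup α] [MeasurableSpace α]
    [OpensMeasurableSpace α] {f : Euc (n + 1) → α} (hf : VanishAtInfty f) (hfm : Measurable f) :
    ∀ᵐ a, VanishAtInfty fun y ↦ f (consMeasurableEquiv n (a, y)) := by
  have hT := measurePreserving_consMeasurableEquiv n
  have hq (q : ℕ) : ∀ᵐ a,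
      volume {y | 1 / ((q : ℝ) + 1) < ‖f (consMeasurableEquiv n (a, y))‖} < ∞ := by
    have hmeas : MeasurableSet {x | 1 / ((q : ℝ) + 1) < ‖f x‖} :=
      measurableSet_lt measurable_const hfm.norm
    have hprod := hT.measure_preimage hmeas.nullMeasurableSet ▸ hf _ (by positivity)
    rw [Measure.prod_apply (hmeas.preimage (consMeasurableEquiv n).measurable)] at hprod
    exact ae_lt_top' (measurable_measure_prodMk_left
      (hmeas.preimage (consMeasurableEquiv n).measurable)).aemeasurable hprod.ne
  filter_upwards [ae_all_iff.2 hq] with a ha using vanishAtInfty_of_forall_nat ha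

end Slices

theorem statement13_general (m : ℕ) (f : Euc (m + 2) → ℝ)
    (hfm : Measurable f) (hf0 : ∀ x, 0 ≤ f x) (hfvan : VanishAtInfty f)
    (w : Euc (m + 2) → ℝ) (W : ℝ → ℝ → ℝ)
    (hwW : ∀ ξ : Euc (m + 2), w ξ = W (ξ 0) ‖show Euc (m + 1) from WithLp.toLp 2 (fun j => ξ j.succ)‖)
    (hWm : ∀ a : ℝ, StrictMonoOn (W a) (Set.Ici 0))
    (hint : Integrable (fun ξ => f ξ * w ξ) volume)
    (hint' : Integrable (fun ξ => steiner1 f ξ * w ξ) volume) :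
    (∫ ξ : Euc (m + 2), steiner1 f ξ * w ξ) ≤ ∫ ξ : Euc (m + 2), f ξ * w ξ := by
  let T := consMeasurableEquiv (m + 1)
  have hT : MeasurePreserving T (volume.prod volume) volume :=
    measurePreserving_consMeasurableEquiv _
  have hnorm (x : Euc (m + 2)) : ‖f x‖ = f x := Real.norm_of_nonneg (hf0 x)
  have hw (a : ℝ) (y : Euc (m + 1)) : w (T (a, y)) = W a ‖y‖ := by
    rw [hwW, consMeasurableEquiv_apply]
    rfl
  have hs (a : ℝ) (y : Euc (m + 1)) :
      steiner1 f (T (a, y)) = symmRearr (fun y' ↦ f (T (a, y'))) y :=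
    steiner1_consMeasurableEquiv f a y
  have hi : Integrable (fun p ↦ f (T p) * w (T p)) (volume.prod volume) :=
    (hT.integrable_comp_emb T.measurableEmbedding).2 hint
  have hi' : Integrable (fun p ↦ steiner1 f (T p) * w (T p)) (volume.prod volume) :=
    (hT.integrable_comp_emb T.measurableEmbedding).2 hint'
  rw [← hT.integral_comp', ← hT.integral_comp', integral_prod _ hi', integral_prod _ hi]
  refine integral_mono_ae hi'.integral_prod_left hi.integral_prod_left ?_
  filter_upwards [hi.prod_right_ae, hi'.prod_right_ae, hfvan.ae_vanishAtInfty_slice hfm]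
    with a hia hia' hva
  simp only [hw, hs] at hia hia' ⊢
  simpa only [hnorm] using integral_symmRearr_mul_le hva
    (hfm.comp (T.measurable.comp measurable_prodMk_left))
    (fun x y hxy ↦ (hWm a).monotoneOn (norm_nonneg x) (norm_nonneg y) hxy)
    (by simpa only [hnorm] using hia) hia'

theorem statement13 (m : ℕ) (f : Euc (m + 2) → ℝ)
    (hfm : Measurable f) (hf0 : ∀ x, 0 ≤ f x) (hfvan : VanishAtInfty f)
    (w : Euc (m + 2) → ℝ) (W : ℝ → ℝ → ℝ)
    (hwW : ∀ ξ : Euc (m + 2), w ξ = W (ξ 0) ‖show Euc (m + 1) from WithLp.toLp 2 (fun j => ξ j.succ)‖)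
    (hWc : ∀ a : ℝ, ContinuousOn (W a) (Set.Ici 0))
    (hWm : ∀ a : ℝ, StrictMonoOn (W a) (Set.Ici 0))
    (hint : Integrable (fun ξ => f ξ * w ξ) volume)
    (hint' : Integrable (fun ξ => steiner1 f ξ * w ξ) volume) :
    (∫ ξ : Euc (m + 2), steiner1 f ξ * w ξ) ≤ ∫ ξ : Euc (m + 2), f ξ * w ξ :=
  statement13_general m f hfm hf0 hfvan w W hwW hWm hint hint'
end
end

section
/- Suppose Ω ⊂ ℝ is an open and nonempty set such that Ω = ⊕_{k=1}^m Ω for some integer m ≥ 2. Then Ω is one of the three sets (0, +∞), (−∞, 0), or ℝ. -/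
noncomputable section

open MeasureTheory Filter Metric Real Classical
open scoped ENNReal Topology Pointwise RealInnerProductSpace ComplexConjugate

section Aux

variable (k : ℕ) (Ω : Set ℝ)
variable (hmink : Ω = {x : ℝ | ∃ y : Fin (k + 2) → ℝ, (∀ i, y i ∈ Ω) ∧ ∑ i, y i = x})

include hmink

lemma aux_step {x c : ℝ} (hx : x ∈ Ω) (hc : c ∈ Ω) : x + (k + 1 : ℝ) * c ∈ Ω := by
  rw [hmink]
  refine ⟨Fin.cons x (fun _ => c), ?_, ?_⟩
  · intro i
    refine Fin.cases ?_ ?_ i <;> simp [hx, hc]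
  · rw [Fin.sum_cons, Finset.sum_const, Finset.card_univ, Fintype.card_fin, nsmul_eq_mul]
    push_cast; ring

lemma aux_stepN {x c : ℝ} (hx : x ∈ Ω) (hc : c ∈ Ω) (j : ℕ) :
    x + (j : ℝ) * ((k + 1 : ℝ) * c) ∈ Ω := by
  induction j with
  | zero => simpa using hx
  | succ n ih =>
    have := aux_step k Ω hmink ih hc
    have heq : x + (n : ℝ) * ((k + 1 : ℝ) * c) + (k + 1 : ℝ) * c
        = x + ((n : ℝ) + 1) * ((k + 1 : ℝ) * c) := by ring
    rw [heq] at this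
    simpa using this

lemma aux_scale {x : ℝ} (hx : x ∈ Ω) : (k + 2 : ℝ) * x ∈ Ω := by
  rw [hmink]
  refine ⟨fun _ => x, fun _ => hx, ?_⟩
  rw [Finset.sum_const, Finset.card_univ, Fintype.card_fin, nsmul_eq_mul]
  push_cast; ring

lemma aux_scaleN {x : ℝ} (hx : x ∈ Ω) (j : ℕ) : (k + 2 : ℝ) ^ j * x ∈ Ω := by
  induction j with
  | zero => simpa using hx
  | succ n ih =>
    have := aux_scale k Ω hmink ih
    rw [← mul_assoc, ← pow_succ'] at this
    exact this

/-- covering upward: if `[a, a+δ) ⊆ Ω` and `e ∈ Ω` with `0 < (k+1)e < δ`,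
then `[a, ∞) ⊆ Ω`. -/
lemma aux_coverUp {a δ e : ℝ} (ha : Set.Ico a (a + δ) ⊆ Ω) (he : e ∈ Ω)
    (hs : 0 < (k + 1 : ℝ) * e) (hδ : (k + 1 : ℝ) * e < δ) {t : ℝ} (ht : a ≤ t) : t ∈ Ω := by
  set s : ℝ := (k + 1 : ℝ) * e with hsdef
  have hs' : 0 < s := hs
  set j : ℕ := ⌊(t - a) / s⌋₊ with hj
  have hta : (0:ℝ) ≤ t - a := by linarith
  have h1 : (j : ℝ) * s ≤ t - a := by
    have := Nat.floor_le (div_nonneg hta hs'.le)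
    calc (j : ℝ) * s ≤ ((t - a) / s) * s := by nlinarith
      _ = t - a := by field_simp
  have h2 : t - a < ((j : ℝ) + 1) * s := by
    have := Nat.lt_floor_add_one ((t - a) / s)
    calc t - a = ((t - a) / s) * s := by field_simp
      _ < ((j : ℝ) + 1) * s := by nlinarith
  have hx : t - (j : ℝ) * s ∈ Set.Ico a (a + δ) := by
    constructor
    · linarith
    · nlinarith
  have := aux_stepN k Ω hmink (ha hx) he j
  simpa [hsdef] using this

lemma aux_pos (hne : Ω.Nonempty) (hop : IsOpen Ω) (hpos : ∀ x ∈ Ω, 0 < x) :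
    Ω = Set.Ioi 0 := by
  have hbdd : BddBelow Ω := ⟨0, fun x hx => (hpos x hx).le⟩
  have hs0 : 0 ≤ sInf Ω := le_csInf hne fun x hx => (hpos x hx).le
  -- sInf Ω = 0
  have hinf : sInf Ω = 0 := by
    have hlow : ∀ x ∈ Ω, (k + 2 : ℝ) * sInf Ω ≤ x := by
      intro x hx
      rw [hmink] at hx
      obtain ⟨y, hy, hsum⟩ := hx
      have : ∀ i : Fin (k + 2), sInf Ω ≤ y i := fun i => csInf_le hbdd (hy i)
      calc (k + 2 : ℝ) * sInf Ω = ∑ _i : Fin (k + 2), sInf Ω := by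
            rw [Finset.sum_const, Finset.card_univ, Fintype.card_fin, nsmul_eq_mul]
            push_cast; ring
        _ ≤ ∑ i, y i := Finset.sum_le_sum fun i _ => this i
        _ = x := hsum
    have h2 : (k + 2 : ℝ) * sInf Ω ≤ sInf Ω := le_csInf hne hlow
    nlinarith
  ext t
  simp only [Set.mem_Ioi]
  constructor
  · exact hpos t
  · intro ht
    obtain ⟨a, haΩ, hat⟩ := exists_lt_of_csInf_lt hne (by rw [hinf]; exact ht)
    obtain ⟨δ, hδ0, hball⟩ := Metric.isOpen_iff.1 hop a haΩ
    rw [Real.ball_eq_Ioo] at hball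
    obtain ⟨e, heΩ, he⟩ := exists_lt_of_csInf_lt hne
      (by rw [hinf]; positivity : sInf Ω < δ / (2 * (k + 1)))
    have he0 : 0 < e := hpos e heΩ
    have hkpos : (0:ℝ) < k + 1 := by positivity
    refine aux_coverUp k Ω hmink (δ := δ) ?_ heΩ (by positivity) ?_ hat.le
    · intro x hx
      exact hball ⟨by linarith [hx.1], hx.2⟩
    · calc (k + 1 : ℝ) * e < (k + 1 : ℝ) * (δ / (2 * (k + 1))) := by nlinarith
        _ = δ / 2 := by field_simp
        _ < δ := by linarith

end Aux

theorem statement18 (k : ℕ) (Ω : Set ℝ) (hne : Ω.Nonempty) (hop : IsOpen Ω)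
    (hmink : Ω = {x : ℝ | ∃ y : Fin (k + 2) → ℝ, (∀ i, y i ∈ Ω) ∧ ∑ i, y i = x}) :
    Ω = Set.Ioi 0 ∨ Ω = Set.Iio 0 ∨ Ω = Set.univ := by
  -- if 0 ∈ Ω then Ω contains positive and negative elements
  have hzero : (0:ℝ) ∈ Ω → (∃ x ∈ Ω, 0 < x) ∧ (∃ x ∈ Ω, x < 0) := by
    intro h0
    obtain ⟨δ, hδ0, hball⟩ := Metric.isOpen_iff.1 hop 0 h0
    rw [Real.ball_eq_Ioo] at hball
    exact ⟨⟨δ/2, hball ⟨by linarith, by linarith⟩, by linarith⟩,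
      ⟨-(δ/2), hball ⟨by linarith, by linarith⟩, by linarith⟩⟩
  by_cases hpos : ∃ x ∈ Ω, 0 < x
  · by_cases hneg : ∃ x ∈ Ω, x < 0
    · -- Ω = univ
      right; right
      obtain ⟨p, hpΩ, hp⟩ := hpos
      obtain ⟨q, hqΩ, hq⟩ := hneg
      obtain ⟨a, haΩ⟩ := hne
      obtain ⟨δ, hδ0, hball⟩ := Metric.isOpen_iff.1 hop a haΩ
      rw [Real.ball_eq_Ioo] at hball
      set M : ℝ := max ((k + 1 : ℝ) * p) ((k + 1 : ℝ) * (-q)) with hM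
      have hM0 : 0 < M := lt_max_of_lt_left (by positivity)
      obtain ⟨j, hjM⟩ := pow_unbounded_of_one_lt (M / δ) (by have := Nat.cast_nonneg (α := ℝ) k; linarith : (1:ℝ) < k + 2)
      have hpow : (0:ℝ) < (k + 2 : ℝ) ^ j := by positivity
      set A : ℝ := (k + 2 : ℝ) ^ j * a with hA
      set Δ : ℝ := (k + 2 : ℝ) ^ j * δ with hΔ
      have hMΔ : M < Δ := by
        rw [hΔ]
        calc M = (M / δ) * δ := by field_simp
          _ < (k + 2 : ℝ) ^ j * δ := by nlinarith
      have hIco : Set.Ico A (A + Δ) ⊆ Ω := by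
        intro t ht
        have hu : t / (k + 2 : ℝ) ^ j ∈ Set.Ioo (a - δ) (a + δ) := by
          constructor
          · rw [lt_div_iff₀ hpow]
            have := ht.1
            nlinarith
          · rw [div_lt_iff₀ hpow]
            have := ht.2
            nlinarith
        have := aux_scaleN k Ω hmink (hball hu) j
        rwa [mul_div_cancel₀ _ (ne_of_gt hpow)] at this
      have hup : ∀ t : ℝ, A ≤ t → t ∈ Ω := fun t ht =>
        aux_coverUp k Ω hmink hIco hpΩ (by positivity)
          (lt_of_le_of_lt (le_max_left _ _) hMΔ) ht
      ext t
      simp only [Set.mem_univ, iff_true]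
      by_cases htA : A ≤ t
      · exact hup t htA
      · push_neg at htA
        set s : ℝ := (k + 1 : ℝ) * (-q) with hsdef
        have hs0 : 0 < s := mul_pos (by positivity) (by linarith)
        set j' : ℕ := ⌈(A - t) / s⌉₊ with hj'
        have h1 : A - t ≤ (j' : ℝ) * s := by
          have := Nat.le_ceil ((A - t) / s)
          calc A - t = ((A - t) / s) * s := by field_simp
            _ ≤ (j' : ℝ) * s := by nlinarith
        have hx : t + (j' : ℝ) * s ∈ Ω := hup _ (by linarith)
        have := aux_stepN k Ω hmink hx hqΩ j'
        have heq : t + (j' : ℝ) * s + (j' : ℝ) * ((k + 1 : ℝ) * q) = t := by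
          rw [hsdef]; ring
        rwa [heq] at this
    · -- Ω = Ioi 0
      left
      refine aux_pos k Ω hmink hne hop ?_
      intro x hx
      push_neg at hneg
      rcases lt_or_eq_of_le (hneg x hx) with h | h
      · exact h
      · exfalso
        obtain ⟨_, ⟨z, hzΩ, hz⟩⟩ := hzero (h ▸ hx)
        exact absurd (hneg z hzΩ) (not_le.2 hz)
  · by_cases hneg : ∃ x ∈ Ω, x < 0
    · -- Ω = Iio 0, via reflection
      right; left
      have hΩneg : ∀ x ∈ Ω, x < 0 := by
        intro x hx
        push_neg at hpos
        rcases lt_or_eq_of_le (hpos x hx) with h | h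
        · exact h
        · exfalso
          obtain ⟨⟨z, hzΩ, hz⟩, _⟩ := hzero (h.symm ▸ hx)
          exact absurd (hpos z hzΩ) (not_le.2 hz)
      have hmink' : -Ω = {x : ℝ | ∃ y : Fin (k + 2) → ℝ, (∀ i, y i ∈ -Ω) ∧ ∑ i, y i = x} := by
        ext x
        simp only [Set.mem_neg, Set.mem_setOf_eq]
        constructor
        · intro hx
          rw [hmink] at hx
          obtain ⟨y, hy, hsum⟩ := hx
          refine ⟨fun i => -(y i), fun i => by simpa using hy i, ?_⟩
          show ∑ i, -(y i) = x
          rw [Finset.sum_neg_distrib, hsum]; ring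
        · rintro ⟨y, hy, rfl⟩
          rw [hmink]
          refine ⟨fun i => -(y i), fun i => Set.mem_neg.1 (hy i), ?_⟩
          show ∑ i, -(y i) = -∑ i, y i
          rw [Finset.sum_neg_distrib]
      have hres : -Ω = Set.Ioi 0 := by
        refine aux_pos k (-Ω) hmink' ?_ hop.neg ?_
        · obtain ⟨a, ha⟩ := hne
          exact ⟨-a, by simpa using ha⟩
        · intro x hx
          rw [Set.mem_neg] at hx
          have := hΩneg _ hx
          linarith
      ext x
      simp only [Set.mem_Iio]
      constructor
      · exact fun h => hΩneg x h
      · intro hx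
        have : -x ∈ -Ω := by rw [hres]; simpa using hx
        simpa using this
    · exfalso
      push_neg at hpos hneg
      obtain ⟨a, ha⟩ := hne
      have ha0 : a = 0 := le_antisymm (hpos a ha) (hneg a ha)
      obtain ⟨⟨z, hzΩ, hz⟩, _⟩ := hzero (ha0 ▸ ha)
      exact absurd (hpos z hzΩ) (not_le.2 hz)
end
end

section
/- Let m ≥ 2 be an integer and let Ω ⊂ [0, +∞) be a nonempty set that is open as a subset of ℝ and satisfies Ω = ⊕_{k=1}^m Ω. Then inf Ω = 0 and Ω = (0, +∞). -/
/-! An open set of reals that is invariant under arbitrarily small positive translations contains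
every point to the right of any of its points: a translate of `x` by a multiple of a translation
length `c` smaller than the radius of a ball around `a ∈ S` lands in that ball. Applied to
`Ω = ⊕_{k=1}^m Ω`, the translations are `t ↦ t + (m - 1) b` with `b ∈ Ω`, and they are arbitrarily
small because `inf Ω = m inf Ω` forces `inf Ω = 0`. -/

noncomputable section

open MeasureTheory Filter Metric Real Classical
open scoped ENNReal Topology Pointwise RealInnerProductSpace ComplexConjugate

/-- The paper's `⊕_{k=1}^m Ω`. -/
def iteratedMinkowskiSum {α : Type*} [AddCommMonoid α] (m : ℕ) (Ω : Set α) : Set α :=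
  {x | ∃ y : Fin m → α, (∀ i, y i ∈ Ω) ∧ ∑ i, y i = x}

lemma add_nsmul_mem_of_iteratedMinkowskiSum_subset {α : Type*} [AddCommMonoid α] {n : ℕ}
    {Ω : Set α} (h : iteratedMinkowskiSum (n + 1) Ω ⊆ Ω) {t b : α} (ht : t ∈ Ω) (hb : b ∈ Ω) :
    t + n • b ∈ Ω :=
  h ⟨Fin.cons t fun _ => b, Fin.cases ht fun _ => hb, by simp [Fin.sum_cons]⟩

lemma csInf_eq_zero_of_subset_iteratedMinkowskiSum {m : ℕ} (hm : 1 < m) {Ω : Set ℝ}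
    (hsub : Ω ⊆ Set.Ici 0) (hne : Ω.Nonempty) (h : Ω ⊆ iteratedMinkowskiSum m Ω) :
    sInf Ω = 0 := by
  have hbdd : BddBelow Ω := ⟨0, hsub⟩
  have hnonneg : 0 ≤ sInf Ω := le_csInf hne hsub
  have hle : (m : ℝ) * sInf Ω ≤ sInf Ω := le_csInf hne fun x hx => by
    obtain ⟨y, hy, rfl⟩ := h hx
    calc (m : ℝ) * sInf Ω = ∑ _i : Fin m, sInf Ω := by simp
      _ ≤ ∑ i, y i := Finset.sum_le_sum fun i _ => csInf_le hbdd (hy i)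
  have hm' : (1 : ℝ) < m := by exact_mod_cast hm
  nlinarith

lemma IsOpen.Ici_subset_of_add_mem {S : Set ℝ} (hS : IsOpen S)
    (hshift : ∀ ε > 0, ∃ c, 0 < c ∧ c < ε ∧ ∀ t ∈ S, t + c ∈ S) {a : ℝ} (ha : a ∈ S) :
    Set.Ici a ⊆ S := by
  intro x hx
  obtain ⟨δ, hδ, hball⟩ := Metric.isOpen_iff.1 hS a ha
  obtain ⟨c, hc, hcδ, hcS⟩ := hshift δ hδ
  set n := ⌊(x - a) / c⌋₊
  have hn : (n : ℝ) * c ≤ x - a :=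
    (le_div_iff₀ hc).1 (Nat.floor_le (div_nonneg (sub_nonneg.2 hx) hc.le))
  have hn' : x - a < (n + 1 : ℝ) * c := (div_lt_iff₀ hc).1 (Nat.lt_floor_add_one _)
  have hy : x - n * c ∈ S := hball <| by
    rw [Real.ball_eq_Ioo]
    constructor <;> nlinarith
  simpa [add_right_iterate] using Set.MapsTo.iterate (f := (· + c)) hcS n hy

theorem statement19 (k : ℕ) (Ω : Set ℝ) (hsub : Ω ⊆ Set.Ici 0)
    (hne : Ω.Nonempty) (hop : IsOpen Ω)
    (hmink : Ω = {x : ℝ | ∃ y : Fin (k + 2) → ℝ, (∀ i, y i ∈ Ω) ∧ ∑ i, y i = x}) :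
    sInf Ω = 0 ∧ Ω = Set.Ioi 0 := by
  change Ω = iteratedMinkowskiSum (k + 2) Ω at hmink
  have hpos : Ω ⊆ Set.Ioi 0 := interior_Ici (a := (0 : ℝ)) ▸ interior_maximal hsub hop
  have hinf : sInf Ω = 0 :=
    csInf_eq_zero_of_subset_iteratedMinkowskiSum (by omega) hsub hne hmink.le
  have hshift : ∀ ε > 0, ∃ c, 0 < c ∧ c < ε ∧ ∀ t ∈ Ω, t + c ∈ Ω := by
    intro ε hε
    obtain ⟨b, hb, hbε⟩ := exists_lt_of_csInf_lt hne (show sInf Ω < ε / (k + 1) by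
      rw [hinf]; positivity)
    refine ⟨(k + 1) • b, nsmul_pos (hpos hb) k.succ_ne_zero, ?_,
      fun t ht => add_nsmul_mem_of_iteratedMinkowskiSum_subset hmink.ge ht hb⟩
    rw [nsmul_eq_mul, Nat.cast_succ, ← lt_div_iff₀' (by positivity)]
    exact hbε
  refine ⟨hinf, hpos.antisymm fun x hx => ?_⟩
  obtain ⟨a, ha, hax⟩ := exists_lt_of_csInf_lt hne (hinf ▸ hx : sInf Ω < x)
  exact hop.Ici_subset_of_add_mem hshift ha hax.le
end
end
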